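/- Assume that the matrix P is irreducible. Then there exist constants δ_1, δ_2 > 0 such that for every finite maximal antichain Γ ⊂ Ω^*: δ_1 ≤ Σ_{σ∈Γ} (p_σ c_σ^r)^{s_r/(s_r+r)} ≤ δ_2. -/

import Mathlib

open Filter MeasureTheory
open scoped ENNReal

namespace QM

/-- A finite word is admissible w.r.t. `P` if consecutive transition probabilities
are positive. -/
def Adm {N : ℕ} (P : Matrix (Fin N) (Fin N) ℝ) (σ : List (Fin N)) : Prop :=
  List.Chain' (fun a b => 0 < P a b) σ

/-- An infinite word is admissible if all consecutive transition probabilities are positive. -/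
def AdmInf {N : ℕ} (P : Matrix (Fin N) (Fin N) ℝ) (τ : ℕ → Fin N) : Prop :=
  ∀ h : ℕ, 0 < P (τ h) (τ (h + 1))

/-- `wprod M σ = M σ₁ σ₂ * ⋯ * M σ_{k-1} σ_k`; equals `1` when `σ` has length at most 1. -/
noncomputable def wprod {N : ℕ} (M : Matrix (Fin N) (Fin N) ℝ) (σ : List (Fin N)) : ℝ :=
  ((σ.zip σ.tail).map fun x => M x.1 x.2).prod

/-- Spectral radius of a real square matrix: the largest modulus of a complex eigenvalue. -/
noncomputable def specRad {ι : Type} [Fintype ι] [DecidableEq ι] (A : Matrix ι ι ℝ) : ℝ :=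
  sSup {x : ℝ | ∃ z : ℂ,
    Module.End.HasEigenvalue (Matrix.toLin' (A.map (fun t => (t : ℂ)))) z ∧ x = ‖z‖}

/-- The matrix `A_{G,s}` with entries `(p_{ij} c_{ij}^r)^{s/(s+r)}` (zero when `p_{ij} = 0`). -/
noncomputable def AGs {N : ℕ} (P c : Matrix (Fin N) (Fin N) ℝ) (r s : ℝ) :
    Matrix (Fin N) (Fin N) ℝ :=
  Matrix.of fun i j => if 0 < P i j then (P i j * c i j ^ r) ^ (s / (s + r)) else 0

/-- `Ψ_G(s)`, the spectral radius of `A_{G,s}`. -/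
noncomputable def PsiG {N : ℕ} (P c : Matrix (Fin N) (Fin N) ℝ) (r s : ℝ) : ℝ :=
  specRad (AGs P c r s)

/-- The submatrix of `A_{G,s}` with rows and columns in `H`. -/
noncomputable def AHs {N : ℕ} (P c : Matrix (Fin N) (Fin N) ℝ) (r s : ℝ)
    (H : Finset (Fin N)) : Matrix {i // i ∈ H} {i // i ∈ H} ℝ :=
  Matrix.of fun i j => AGs P c r s i.1 j.1

/-- `Ψ_H(s)`, the spectral radius of `A_{H,s}`. -/
noncomputable def PsiH {N : ℕ} (P c : Matrix (Fin N) (Fin N) ℝ) (r s : ℝ)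
    (H : Finset (Fin N)) : ℝ :=
  specRad (AHs P c r s H)

/-- Edge relation of the directed graph `G` associated with `P`. -/
def Edge {N : ℕ} (P : Matrix (Fin N) (Fin N) ℝ) (i j : Fin N) : Prop := 0 < P i j

/-- Reachability along directed paths all of whose vertices lie in `S`. -/
def ReachIn {N : ℕ} (P : Matrix (Fin N) (Fin N) ℝ) (S : Set (Fin N)) (i j : Fin N) : Prop :=
  Relation.ReflTransGen (fun a b => Edge P a b ∧ a ∈ S ∧ b ∈ S) i j

/-- A set of vertices is strongly connected (with the inherited edges). -/
def StrConn {N : ℕ} (P : Matrix (Fin N) (Fin N) ℝ) (S : Set (Fin N)) : Prop :=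
  ∀ i ∈ S, ∀ j ∈ S, ReachIn P S i j

/-- `H` is a strongly connected component of `G` containing at least one edge. -/
def IsSCC {N : ℕ} (P : Matrix (Fin N) (Fin N) ℝ) (H : Finset (Fin N)) : Prop :=
  StrConn P ↑H ∧ (∀ S : Finset (Fin N), H ⊆ S → StrConn P ↑S → S = H) ∧
    ∃ i ∈ H, ∃ j ∈ H, Edge P i j

/-- `H₁ ≺ H₂` : some vertex of `H₂` can be reached from some vertex of `H₁` by a
directed path in `G`. -/
def Prec {N : ℕ} (P : Matrix (Fin N) (Fin N) ℝ) (H₁ H₂ : Finset (Fin N)) : Prop :=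
  ∃ i ∈ H₁, ∃ j ∈ H₂, Relation.ReflTransGen (Edge P) i j

/-- Irreducibility of `P` : the graph `G` is strongly connected. -/
def Irred {N : ℕ} (P : Matrix (Fin N) (Fin N) ℝ) : Prop :=
  ∀ i j : Fin N, Relation.TransGen (Edge P) i j

/-- `Γ` is a finite maximal antichain in `Ω^*`. -/
def IsMaxAntichain {N : ℕ} (P : Matrix (Fin N) (Fin N) ℝ) (Γ : Finset (List (Fin N))) : Prop :=
  (∀ σ ∈ Γ, σ ≠ [] ∧ Adm P σ) ∧
    (∀ σ ∈ Γ, ∀ ω ∈ Γ, σ ≠ ω → ¬ σ <+: ω) ∧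
    ∀ τ : ℕ → Fin N, AdmInf P τ → ∃ k : ℕ, 0 < k ∧ (List.range k).map τ ∈ Γ

/-- `Γ` is a finite maximal antichain in `H^*`. -/
def IsMaxAntichainIn {N : ℕ} (P : Matrix (Fin N) (Fin N) ℝ) (H : Finset (Fin N))
    (Γ : Finset (List (Fin N))) : Prop :=
  (∀ σ ∈ Γ, σ ≠ [] ∧ Adm P σ ∧ ∀ a ∈ σ, a ∈ H) ∧
    (∀ σ ∈ Γ, ∀ ω ∈ Γ, σ ≠ ω → ¬ σ <+: ω) ∧
    ∀ τ : ℕ → Fin N, AdmInf P τ → (∀ h, τ h ∈ H) → ∃ k : ℕ, 0 < k ∧ (List.range k).map τ ∈ Γ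

/-- `Γ` is a finite maximal antichain in `H^*(i)`. -/
def IsMaxAntichainInAt {N : ℕ} (P : Matrix (Fin N) (Fin N) ℝ) (H : Finset (Fin N)) (i : Fin N)
    (Γ : Finset (List (Fin N))) : Prop :=
  (∀ σ ∈ Γ, σ ≠ [] ∧ Adm P σ ∧ (∀ a ∈ σ, a ∈ H) ∧ σ.head? = some i) ∧
    (∀ σ ∈ Γ, ∀ ω ∈ Γ, σ ≠ ω → ¬ σ <+: ω) ∧
    ∀ τ : ℕ → Fin N, AdmInf P τ → (∀ h, τ h ∈ H) → τ 0 = i →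
      ∃ k : ℕ, 0 < k ∧ (List.range k).map τ ∈ Γ

/-- The `n`-th quantization error of order `r` for a measure on `ℝ^q`. -/
noncomputable def quantErr {q : ℕ} (ν : Measure (EuclideanSpace ℝ (Fin q))) (r : ℝ)
    (n : ℕ) : ℝ :=
  sInf {e : ℝ | ∃ α : Finset (EuclideanSpace ℝ (Fin q)), α.Nonempty ∧ α.card ≤ n ∧
    e = (∫ x, Metric.infDist x (↑α : Set (EuclideanSpace ℝ (Fin q))) ^ r ∂ν) ^ (1 / r)}

/-- The `s`-dimensional upper quantization coefficient of order `r`,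
`limsup_n n^{r/s} e_{n,r}^r`. -/
noncomputable def upperQCoeff {q : ℕ} (ν : Measure (EuclideanSpace ℝ (Fin q)))
    (r s : ℝ) : ℝ≥0∞ :=
  Filter.limsup (fun n : ℕ => ENNReal.ofReal ((n : ℝ) ^ (r / s) * quantErr ν r n ^ r))
    Filter.atTop

/-- The `s`-dimensional lower quantization coefficient of order `r`,
`liminf_n n^{r/s} e_{n,r}^r`. -/
noncomputable def lowerQCoeff {q : ℕ} (ν : Measure (EuclideanSpace ℝ (Fin q)))
    (r s : ℝ) : ℝ≥0∞ :=
  Filter.liminf (fun n : ℕ => ENNReal.ofReal ((n : ℝ) ^ (r / s) * quantErr ν r n ^ r))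
    Filter.atTop

/-- The upper quantization dimension of order `r`. -/
noncomputable def upperQDim {q : ℕ} (ν : Measure (EuclideanSpace ℝ (Fin q))) (r : ℝ) : ℝ :=
  Filter.limsup (fun n : ℕ => Real.log n / (- Real.log (quantErr ν r n))) Filter.atTop

/-- The lower quantization dimension of order `r`. -/
noncomputable def lowerQDim {q : ℕ} (ν : Measure (EuclideanSpace ℝ (Fin q))) (r : ℝ) : ℝ :=
  Filter.liminf (fun n : ℕ => Real.log n / (- Real.log (quantErr ν r n))) Filter.atTop

/-- `η = min {p_{ij} c_{ij}^r : p_{ij} > 0}`. -/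
noncomputable def eta {N : ℕ} (P c : Matrix (Fin N) (Fin N) ℝ) (r : ℝ) : ℝ :=
  sInf {x : ℝ | ∃ i j, 0 < P i j ∧ x = P i j * c i j ^ r}

/-- The finite maximal antichain `Λ_{j,r}`. -/
def Lambda {N : ℕ} (P c : Matrix (Fin N) (Fin N) ℝ) (r : ℝ) (j : ℕ) : Set (List (Fin N)) :=
  {σ | σ ≠ [] ∧ Adm P σ ∧
    eta P c r ^ j ≤ wprod P σ.dropLast * wprod c σ.dropLast ^ r ∧
    wprod P σ * wprod c σ ^ r < eta P c r ^ j}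

/-- `φ_{j,r}`, the cardinality of `Λ_{j,r}`. -/
noncomputable def phi {N : ℕ} (P c : Matrix (Fin N) (Fin N) ℝ) (r : ℝ) (j : ℕ) : ℕ :=
  (Lambda P c r j).ncard

end QM

/-!
Perron–Frobenius applied to the irreducible matrix `A = A_{G,s_r}`, whose spectral radius is `1`,
gives a vector `w > 0` with `A w = w`. Give a word `σ` the weight `A_σ w(σ_last)`; then the weight
of a word is the sum of the weights of its one-letter extensions, so every finite maximal
antichain carries the total weight `∑ w` (split the words of a length exceeding all lengths in the
antichain according to their prefix in it). Since `A_σ = (p_σ c_σ^r)^{s_r/(s_r+r)}` on admissible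
words, the antichain sum lies between `∑ w / max w` and `∑ w / min w`.

For the Perron–Frobenius step, an eigenvalue of modulus `1` yields `x ≥ 0`, `x ≠ 0`, with
`x ≤ A x`. If `x ≠ A x`, smoothing by the positive matrix `B = ∑_{k<M} A^k` gives `B x > 0` with
`A (B x) ≥ (1 + ε) B x`, so `tr (A^n B)` grows exponentially; but `tr (A^n B)` is a sum of `M`
traces `tr A^k`, each at most the dimension because all eigenvalues have modulus at most `1`.
Then `B x` is the positive fixed vector.
-/

open Matrix Filter Topology

lemma exists_pos_mul_le {α : Type*} [Finite α] (f : α → ℝ) {g : α → ℝ} (hg : ∀ a, 0 < g a) :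
    ∃ γ > 0, ∀ a, γ * f a ≤ g a := by
  have hsmall : ∀ᶠ γ in 𝓝[>] (0 : ℝ), ∀ a, γ * f a < g a :=
    eventually_all.2 fun a => by
      have : Tendsto (fun γ : ℝ => γ * f a) (𝓝[>] 0) (𝓝 0) := by
        simpa using ((continuous_mul_const (f a)).tendsto 0).mono_left nhdsWithin_le_nhds
      exact this.eventually (gt_mem_nhds (hg a))
  obtain ⟨γ, hγ, hγ0⟩ := (hsmall.and self_mem_nhdsWithin).exists
  exact ⟨γ, hγ0, fun a => (hγ a).le⟩

namespace Matrix

lemma isIrreducible_of_transGen {ι R : Type*} [Ring R] [LinearOrder R] {A : Matrix ι ι R}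
    (hA : ∀ i j, 0 ≤ A i j) (h : ∀ i j, Relation.TransGen (fun a b => 0 < A a b) i j) :
    A.IsIrreducible := by
  let := toQuiver A
  refine ⟨hA, fun i j => ?_⟩
  induction h i j with
  | single hab => exact ⟨Quiver.Path.nil.cons ⟨hab⟩, by simp⟩
  | tail _ hbc ih => exact ⟨ih.choose.cons ⟨hbc⟩, by simp⟩

variable {ι : Type*} [Fintype ι] {A : Matrix ι ι ℝ}

lemma mulVec_mono (hA : ∀ i j, 0 ≤ A i j) {v v' : ι → ℝ} (h : v ≤ v') : A *ᵥ v ≤ A *ᵥ v' :=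
  fun i => Finset.sum_le_sum fun j _ => mul_le_mul_of_nonneg_left (h j) (hA i j)

lemma mulVec_pos_of_pos {B : Matrix ι ι ℝ} (hB : ∀ i j, 0 < B i j) {v : ι → ℝ} (hv : 0 < v)
    (i : ι) : 0 < (B *ᵥ v) i := by
  obtain ⟨hv0, j, hj⟩ := Pi.lt_def.1 hv
  exact Finset.sum_pos' (fun j _ => mul_nonneg (hB i j).le (hv0 j))
    ⟨j, Finset.mem_univ j, mul_pos (hB i j) hj⟩

lemma norm_mul_norm_le_mulVec_norm (hA : ∀ i j, 0 ≤ A i j) {z : ℂ} {u : ι → ℂ}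
    (hu : A.map Complex.ofReal *ᵥ u = z • u) (i : ι) :
    ‖z‖ * ‖u i‖ ≤ (A *ᵥ fun j => ‖u j‖) i :=
  calc ‖z‖ * ‖u i‖ = ‖(A.map Complex.ofReal *ᵥ u) i‖ := by simp [hu]
    _ ≤ ∑ j, ‖A.map Complex.ofReal i j * u j‖ := norm_sum_le _ _
    _ = (A *ᵥ fun j => ‖u j‖) i := by
        simp [mulVec, dotProduct, abs_of_nonneg (hA i _)]

variable [DecidableEq ι]

lemma pow_smul_le_pow_mulVec (hA : ∀ i j, 0 ≤ A i j) {q : ℝ} (hq : 0 ≤ q) {w : ι → ℝ}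
    (h : q • w ≤ A *ᵥ w) (n : ℕ) : q ^ n • w ≤ (A ^ n) *ᵥ w := by
  induction n with
  | zero => simp
  | succ n ih =>
    calc q ^ (n + 1) • w = q ^ n • (q • w) := by rw [pow_succ, mul_smul]
      _ ≤ q ^ n • (A *ᵥ w) := smul_le_smul_of_nonneg_left h (pow_nonneg hq n)
      _ = A *ᵥ (q ^ n • w) := (mulVec_smul _ _ _).symm
      _ ≤ A *ᵥ (A ^ n *ᵥ w) := mulVec_mono hA ih
      _ = A ^ (n + 1) *ᵥ w := by rw [mulVec_mulVec, pow_succ']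

lemma not_bddAbove_range_trace_pow_mul [Nonempty ι] (hA : ∀ i j, 0 ≤ A i j)
    {B : Matrix ι ι ℝ} (hB : ∀ i j, 0 < B i j) {w : ι → ℝ} (hw : ∀ i, 0 < w i) {q : ℝ}
    (hq : 1 < q) (h : q • w ≤ A *ᵥ w) : ¬ BddAbove (Set.range fun n => trace (A ^ n * B)) := by
  obtain ⟨γ, hγ, hγB⟩ := exists_pos_mul_le (fun p : ι × ι => w p.1) fun p => hB p.1 p.2
  have hS : 0 < ∑ i, w i := Finset.sum_pos (fun i _ => hw i) Finset.univ_nonempty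
  have hlow : ∀ n, γ * (∑ i, w i) * q ^ n ≤ trace (A ^ n * B) := fun n =>
    calc γ * (∑ i, w i) * q ^ n = γ * ∑ i, (q ^ n • w) i := by
          simp only [Pi.smul_apply, smul_eq_mul, ← Finset.mul_sum]; ring
      _ ≤ γ * ∑ i, (A ^ n *ᵥ w) i := by
          gcongr with i; exact pow_smul_le_pow_mulVec hA (by linarith) h n i
      _ = ∑ i, ∑ j, (A ^ n) i j * (γ * w j) := by
          simp only [mulVec, dotProduct, Finset.mul_sum]; congr! 2; ring
      _ ≤ ∑ i, ∑ j, (A ^ n) i j * B j i := by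
          gcongr with i _ j
          · exact pow_apply_nonneg hA n i j
          · exact hγB (j, i)
      _ = trace (A ^ n * B) := by simp [trace, mul_apply]
  rintro ⟨C, hC⟩
  obtain ⟨n, hn⟩ := pow_unbounded_of_one_lt (C / (γ * ∑ i, w i)) hq
  rw [div_lt_iff₀' (by positivity)] at hn
  exact (hn.trans_le (hlow n)).not_ge (hC ⟨n, rfl⟩)

lemma IsIrreducible.exists_sum_pow_pos (hA : A.IsIrreducible) :
    ∃ M, ∀ i j, 0 < (∑ k ∈ Finset.range M, A ^ k) i j := by
  choose k hk hpos using (isIrreducible_iff_exists_pow_pos hA.nonneg).1 hA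
  refine ⟨Finset.univ.sup (fun p : ι × ι => k p.1 p.2) + 1, fun i j => ?_⟩
  rw [sum_apply]
  refine Finset.sum_pos' (fun n _ => pow_apply_nonneg hA.nonneg n i j)
    ⟨k i j, Finset.mem_range.2 (Nat.lt_succ_of_le ?_), hpos i j⟩
  exact Finset.le_sup (f := fun p : ι × ι => k p.1 p.2) (Finset.mem_univ (i, j))

theorem IsIrreducible.mulVec_eq_of_le_mulVec [Nonempty ι] (hA : A.IsIrreducible) {C : ℝ}
    (htr : ∀ k, trace (A ^ k) ≤ C) {x : ι → ℝ} (hx : 0 < x) (hle : x ≤ A *ᵥ x) :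
    A *ᵥ x = x := by
  obtain ⟨M, hB⟩ := hA.exists_sum_pow_pos
  set B := ∑ k ∈ Finset.range M, A ^ k
  have hAB : Commute A B := Commute.sum_right _ _ _ fun k _ => (Commute.refl A).pow_right k
  refine (hle.eq_of_not_lt fun hlt => ?_).symm
  obtain ⟨ε, hε, hεB⟩ := exists_pos_mul_le (B *ᵥ x) (mulVec_pos_of_pos hB (sub_pos.2 hlt))
  have hgrow : (1 + ε) • (B *ᵥ x) ≤ A *ᵥ (B *ᵥ x) := fun i => by
    have hsplit : A *ᵥ (B *ᵥ x) = B *ᵥ x + B *ᵥ (A *ᵥ x - x) := by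
      rw [mulVec_sub, mulVec_mulVec, mulVec_mulVec, hAB.eq, ← mulVec_mulVec]; abel
    simp only [hsplit, Pi.add_apply, Pi.smul_apply, smul_eq_mul]
    linarith [hεB i]
  refine not_bddAbove_range_trace_pow_mul hA.nonneg hB (mulVec_pos_of_pos hB hx)
    (by linarith) hgrow ⟨M * C, ?_⟩
  rintro _ ⟨n, rfl⟩
  calc trace (A ^ n * B) = ∑ k ∈ Finset.range M, trace (A ^ (n + k)) := by
        simp only [B, Finset.mul_sum, trace_sum, pow_add]
    _ ≤ M * C := by simpa using Finset.sum_le_sum fun k (_ : k ∈ Finset.range M) => htr (n + k)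

end Matrix

namespace QM

variable {ι : Type} [Fintype ι] [DecidableEq ι] (A : Matrix ι ι ℝ)

lemma finite_norm_eigenvalues :
    {x : ℝ | ∃ z : ℂ, Module.End.HasEigenvalue (toLin' (A.map Complex.ofReal)) z ∧
      x = ‖z‖}.Finite := by
  simpa [eq_comm, Set.image] using
    (Module.End.finite_hasEigenvalue (toLin' (A.map Complex.ofReal))).image (‖·‖)

lemma norm_le_specRad {z : ℂ} (hz : Module.End.HasEigenvalue (toLin' (A.map Complex.ofReal)) z) :
    ‖z‖ ≤ specRad A :=
  le_csSup (finite_norm_eigenvalues A).bddAbove ⟨z, hz, rfl⟩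

lemma exists_hasEigenvalue_norm_eq_specRad [Nonempty ι] :
    ∃ z : ℂ, Module.End.HasEigenvalue (toLin' (A.map Complex.ofReal)) z ∧ ‖z‖ = specRad A := by
  obtain ⟨z, hz⟩ := Module.End.exists_eigenvalue (toLin' (A.map Complex.ofReal))
  obtain ⟨z', hz', h⟩ :=
    Set.Nonempty.csSup_mem (by exact ⟨‖z‖, z, hz, rfl⟩) (finite_norm_eigenvalues A)
  exact ⟨z', hz', h.symm⟩

lemma trace_pow_le_card
    (h : ∀ z, Module.End.HasEigenvalue (toLin' (A.map Complex.ofReal)) z → ‖z‖ ≤ 1) (k : ℕ) :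
    trace (A ^ k) ≤ Fintype.card ι := by
  rcases k.eq_zero_or_pos with rfl | hk
  · simp
  set Aℂ := A.map Complex.ofReal
  have hroots : ∀ ρ ∈ (Aℂ ^ k).charpoly.roots, ‖ρ‖ ≤ 1 := by
    intro ρ hρ
    have hρ' : ρ ∈ spectrum ℂ (toLin' Aℂ ^ k) := by
      rw [← toLin'_pow, ← Module.End.hasEigenvalue_iff_mem_spectrum,
        Module.End.hasEigenvalue_iff_isRoot_charpoly, charpoly_toLin']
      exact Polynomial.isRoot_of_mem_roots hρ
    rw [spectrum.map_pow_of_pos _ hk] at hρ'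
    obtain ⟨z, hz, rfl⟩ := hρ'
    rw [norm_pow]
    exact pow_le_one₀ (norm_nonneg _) (h z (Module.End.hasEigenvalue_iff_mem_spectrum.2 hz))
  have hcast : ((trace (A ^ k) : ℝ) : ℂ) = (Aℂ ^ k).charpoly.roots.sum := by
    rw [← trace_eq_sum_roots_charpoly, show Aℂ ^ k = (A ^ k).map Complex.ofRealHom from
      (Matrix.map_pow A Complex.ofRealHom k).symm]
    simp [trace]
  have hcard : Multiset.card (Aℂ ^ k).charpoly.roots ≤ Fintype.card ι :=
    (Polynomial.card_roots' _).trans (charpoly_natDegree_eq_dim _).le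
  calc trace (A ^ k) ≤ ‖((trace (A ^ k) : ℝ) : ℂ)‖ := by
        rw [Complex.norm_real]; exact le_abs_self _
    _ ≤ ((Aℂ ^ k).charpoly.roots.map (‖·‖)).sum := hcast ▸ norm_multiset_sum_le _
    _ ≤ Multiset.card (Aℂ ^ k).charpoly.roots • (1 : ℝ) := by
        simpa using Multiset.sum_le_card_nsmul ((Aℂ ^ k).charpoly.roots.map (‖·‖)) 1
          (by simpa only [Multiset.mem_map, forall_exists_index, and_imp,
            forall_apply_eq_imp_iff₂] using hroots)
    _ ≤ Fintype.card ι := by simpa using (Nat.cast_le (α := ℝ)).2 hcard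

end QM

namespace Matrix

variable {ι : Type} [Fintype ι] [DecidableEq ι] {A : Matrix ι ι ℝ}

theorem IsIrreducible.exists_pos_mulVec_eq_self [Nonempty ι] (hA : A.IsIrreducible)
    (hρ : QM.specRad A = 1) : ∃ w : ι → ℝ, (∀ i, 0 < w i) ∧ A *ᵥ w = w := by
  obtain ⟨z, hz, hz1⟩ := QM.exists_hasEigenvalue_norm_eq_specRad A
  obtain ⟨u, hu⟩ := hz.exists_hasEigenvector
  have hx : 0 < fun j => ‖u j‖ := by
    obtain ⟨i, hi⟩ := Function.ne_iff.1 hu.2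
    exact Pi.lt_def.2 ⟨fun j => norm_nonneg _, i, norm_pos_iff.2 hi⟩
  have hle : (fun j => ‖u j‖) ≤ A *ᵥ fun j => ‖u j‖ := fun i => by
    have := norm_mul_norm_le_mulVec_norm hA.nonneg
      (by simpa [toLin'_apply] using hu.apply_eq_smul) i
    rwa [hz1, hρ, one_mul] at this
  have htr := QM.trace_pow_le_card A fun z' hz' => hρ ▸ QM.norm_le_specRad A hz'
  obtain ⟨M, hB⟩ := hA.exists_sum_pow_pos
  have hAB : Commute A (∑ k ∈ Finset.range M, A ^ k) :=
    Commute.sum_right _ _ _ fun k _ => (Commute.refl A).pow_right k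
  refine ⟨_, mulVec_pos_of_pos hB hx, ?_⟩
  rw [mulVec_mulVec, hAB.eq, ← mulVec_mulVec, hA.mulVec_eq_of_le_mulVec htr hx hle]

end Matrix

namespace QM

section PathWeight

variable {ι : Type*} [Fintype ι] (A : Matrix ι ι ℝ) (w : ι → ℝ)

/-- `pathWeight A w σ = A_σ · w (last σ)`; the empty word, the root of the tree of words, carries
the total weight `∑ i, w i`, so that `sum_pathWeight_append_singleton` holds at the root too. -/
def pathWeight : List ι → ℝ
  | [] => ∑ i, w i
  | [a] => w a
  | a :: b :: l => A a b * pathWeight (b :: l)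

variable {A w}

lemma sum_pathWeight_append_singleton (hw : A *ᵥ w = w) :
    ∀ σ : List ι, ∑ j, pathWeight A w (σ ++ [j]) = pathWeight A w σ
  | [] => by simp [pathWeight]
  | [a] => by simpa [pathWeight, mulVec, dotProduct] using congrFun hw a
  | a :: b :: l => by
    have ih := sum_pathWeight_append_singleton hw (b :: l)
    simp only [List.cons_append] at ih
    simp only [List.cons_append, pathWeight, ← Finset.mul_sum, ih]

lemma isChain_ne_zero_of_pathWeight_ne_zero :
    ∀ {σ : List ι}, pathWeight A w σ ≠ 0 → σ.IsChain fun a b => A a b ≠ 0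
  | [], _ => List.isChain_nil
  | [_], _ => List.isChain_singleton _
  | a :: b :: l, h => by
    rw [pathWeight, mul_ne_zero_iff] at h
    exact List.isChain_cons_cons.2 ⟨h.1, isChain_ne_zero_of_pathWeight_ne_zero h.2⟩

variable [DecidableEq ι]

lemma sum_ite_prefix_pathWeight (hw : A *ᵥ w = w) (σ : List ι) {n : ℕ} (hn : σ.length ≤ n) :
    ∑ f : Fin n → ι, (if σ <+: List.ofFn f then pathWeight A w (List.ofFn f) else 0) =
      pathWeight A w σ := by
  induction n, hn using Nat.le_induction with
  | base =>
    have hpre : ∀ f : Fin σ.length → ι, σ <+: List.ofFn f ↔ σ.get = f := fun f => by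
      rw [← List.ofFn_inj, List.ofFn_get]
      exact ⟨fun h => h.eq_of_length (by simp), fun h => h ▸ List.prefix_refl σ⟩
    simp_rw [hpre, Finset.sum_ite_eq, Finset.mem_univ, if_true, List.ofFn_get]
  | succ n hn ih =>
    have hsnoc : ∀ (j : ι) (g : Fin n → ι),
        List.ofFn ((Fin.snocEquiv fun _ => ι) (j, g)) = List.ofFn g ++ [j] := fun j g => by
      rw [List.ofFn_succ']; simp [Fin.snocEquiv]
    have hpre : ∀ (j : ι) (g : Fin n → ι), σ <+: List.ofFn g ++ [j] ↔ σ <+: List.ofFn g :=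
      fun j g => List.prefix_concat_iff.trans <| or_iff_right fun h => by
        have := congrArg List.length h; simp at this; omega
    rw [← (Fin.snocEquiv fun _ => ι).sum_comp, Fintype.sum_prod_type, Finset.sum_comm, ← ih]
    refine Finset.sum_congr rfl fun g _ => ?_
    simp only [hsnoc, hpre]
    split_ifs
    · exact sum_pathWeight_append_singleton hw _
    · simp

theorem sum_pathWeight_of_isAntichain (hw : A *ᵥ w = w) {Γ : Finset (List ι)} {n : ℕ}
    (hanti : ∀ σ ∈ Γ, ∀ ω ∈ Γ, σ ≠ ω → ¬ σ <+: ω) (hlen : ∀ σ ∈ Γ, σ.length ≤ n)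
    (hcover : ∀ τ : List ι, τ.length = n → pathWeight A w τ ≠ 0 → ∃ σ ∈ Γ, σ <+: τ) :
    ∑ σ ∈ Γ, pathWeight A w σ = ∑ i, w i := by
  have hsplit : ∀ τ : List ι, τ.length = n →
      ∑ σ ∈ Γ, (if σ <+: τ then pathWeight A w τ else 0) = pathWeight A w τ := by
    intro τ hτ
    by_cases h0 : pathWeight A w τ = 0
    · simp [h0]
    obtain ⟨σ, hσ, hστ⟩ := hcover τ hτ h0
    rw [Finset.sum_eq_single σ (fun ω hω hne => if_neg fun hωτ => ?_) (absurd hσ), if_pos hστ]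
    rcases List.prefix_or_prefix_of_prefix hωτ hστ with h | h
    exacts [hanti ω hω σ hσ hne h, hanti σ hσ ω hω (Ne.symm hne) h]
  calc ∑ σ ∈ Γ, pathWeight A w σ
      = ∑ σ ∈ Γ, ∑ f : Fin n → ι,
          (if σ <+: List.ofFn f then pathWeight A w (List.ofFn f) else 0) :=
        Finset.sum_congr rfl fun σ hσ => (sum_ite_prefix_pathWeight hw σ (hlen σ hσ)).symm
    _ = ∑ f : Fin n → ι, pathWeight A w (List.ofFn f) := by
        rw [Finset.sum_comm]; exact Finset.sum_congr rfl fun f _ => hsplit _ (List.length_ofFn)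
    _ = ∑ i, w i := by simpa [pathWeight] using sum_ite_prefix_pathWeight hw [] n.zero_le

end PathWeight

section Words

variable {N : ℕ}

@[simp] lemma wprod_nil (M : Matrix (Fin N) (Fin N) ℝ) : wprod M [] = 1 := rfl

@[simp] lemma wprod_singleton (M : Matrix (Fin N) (Fin N) ℝ) (a : Fin N) : wprod M [a] = 1 := rfl

@[simp] lemma wprod_cons_cons (M : Matrix (Fin N) (Fin N) ℝ) (a b : Fin N) (l : List (Fin N)) :
    wprod M (a :: b :: l) = M a b * wprod M (b :: l) := by
  simp [wprod]

lemma wprod_nonneg {M : Matrix (Fin N) (Fin N) ℝ} (hM : ∀ i j, 0 ≤ M i j) (σ : List (Fin N)) :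
    0 ≤ wprod M σ :=
  List.prod_nonneg fun _ hx => by
    obtain ⟨p, -, rfl⟩ := List.mem_map.1 hx
    exact hM p.1 p.2

lemma wprod_pos {M : Matrix (Fin N) (Fin N) ℝ} :
    ∀ {σ : List (Fin N)}, σ.IsChain (fun a b => 0 < M a b) → 0 < wprod M σ
  | [], _ | [_], _ => by simp
  | a :: b :: l, h => by
    obtain ⟨hab, hl⟩ := List.isChain_cons_cons.1 h
    simpa using mul_pos hab (wprod_pos hl)

lemma pathWeight_eq_wprod_mul (M : Matrix (Fin N) (Fin N) ℝ) (w : Fin N → ℝ) :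
    ∀ {σ : List (Fin N)} (hσ : σ ≠ []), pathWeight M w σ = wprod M σ * w (σ.getLast hσ)
  | [a], _ => by simp [pathWeight]
  | a :: b :: l, _ => by
    rw [pathWeight, pathWeight_eq_wprod_mul M w (List.cons_ne_nil b l), wprod_cons_cons,
      List.getLast_cons_cons, mul_assoc]

lemma pathWeight_le_wprod_mul {M : Matrix (Fin N) (Fin N) ℝ} (hM : ∀ i j, 0 ≤ M i j)
    {w : Fin N → ℝ} {b : ℝ} (hb : ∀ i, w i ≤ b) {σ : List (Fin N)} (hσ : σ ≠ []) :
    pathWeight M w σ ≤ wprod M σ * b := by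
  rw [pathWeight_eq_wprod_mul M w hσ]
  exact mul_le_mul_of_nonneg_left (hb _) (wprod_nonneg hM σ)

lemma wprod_mul_le_pathWeight {M : Matrix (Fin N) (Fin N) ℝ} (hM : ∀ i j, 0 ≤ M i j)
    {w : Fin N → ℝ} {b : ℝ} (hb : ∀ i, b ≤ w i) {σ : List (Fin N)} (hσ : σ ≠ []) :
    wprod M σ * b ≤ pathWeight M w σ := by
  rw [pathWeight_eq_wprod_mul M w hσ]
  exact mul_le_mul_of_nonneg_left (hb _) (wprod_nonneg hM σ)

variable {P c : Matrix (Fin N) (Fin N) ℝ} {r s : ℝ}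

lemma AGs_pos (hc : ∀ i j, 0 < P i j → 0 < c i j) {i j : Fin N} (h : 0 < P i j) :
    0 < AGs P c r s i j := by
  simp only [AGs, of_apply, if_pos h]
  exact Real.rpow_pos_of_pos (mul_pos h (Real.rpow_pos_of_pos (hc i j h) r)) _

lemma AGs_nonneg (hc : ∀ i j, 0 < P i j → 0 < c i j) (i j : Fin N) : 0 ≤ AGs P c r s i j := by
  by_cases h : 0 < P i j
  · exact (AGs_pos hc h).le
  · simp [AGs, h]

lemma pos_of_AGs_ne_zero {i j : Fin N} (h : AGs P c r s i j ≠ 0) : 0 < P i j := by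
  by_contra hP
  exact h (by simp [AGs, hP])

lemma rpow_wprod_eq_wprod_AGs (hc : ∀ i j, 0 < P i j → 0 < c i j) :
    ∀ {σ : List (Fin N)}, Adm P σ →
      (wprod P σ * wprod c σ ^ r) ^ (s / (s + r)) = wprod (AGs P c r s) σ
  | [], _ | [_], _ => by simp
  | a :: b :: l, h => by
    obtain ⟨hab, hl⟩ := List.isChain_cons_cons.1 h
    have hPl := wprod_pos hl
    have hcl := wprod_pos (hl.imp fun i j => hc i j)
    rw [wprod_cons_cons, wprod_cons_cons, wprod_cons_cons, ← rpow_wprod_eq_wprod_AGs hc hl,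
      Real.mul_rpow (hc a b hab).le hcl.le, mul_mul_mul_comm, Real.mul_rpow
        (mul_pos hab (Real.rpow_pos_of_pos (hc a b hab) r)).le (by positivity)]
    simp [AGs, hab]

end Words

section Antichain

variable {N : ℕ} {P : Matrix (Fin N) (Fin N) ℝ}

lemma Irred.exists_pos (hirr : Irred P) (i : Fin N) : ∃ j, 0 < P i j := by
  obtain ⟨j, hij, -⟩ := Relation.TransGen.head'_iff.1 (hirr i i)
  exact ⟨j, hij⟩

lemma isIrreducible_AGs {c : Matrix (Fin N) (Fin N) ℝ} {r s : ℝ}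
    (hc : ∀ i j, 0 < P i j → 0 < c i j) (hirr : Irred P) : (AGs P c r s).IsIrreducible :=
  isIrreducible_of_transGen (AGs_nonneg hc) fun i j =>
    Relation.TransGen.mono (fun _ _ => AGs_pos hc) _ _ (hirr i j)

lemma exists_admInf_extend (hout : ∀ i, ∃ j, 0 < P i j) :
    ∀ {τ : List (Fin N)}, τ ≠ [] → Adm P τ →
      ∃ τ' : ℕ → Fin N, AdmInf P τ' ∧ (List.range τ.length).map τ' = τ
  | [a], _, _ => by
    choose next hnext using hout
    exact ⟨fun k => next^[k] a, fun k => by simpa [Function.iterate_succ_apply'] using hnext _,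
      by simp⟩
  | a :: b :: l, _, h => by
    obtain ⟨hab, hl⟩ := List.isChain_cons_cons.1 h
    obtain ⟨τ', hτ', heq⟩ := exists_admInf_extend hout (List.cons_ne_nil b l) hl
    have hb : τ' 0 = b := by simpa [List.range_succ_eq_map] using congrArg List.head? heq
    refine ⟨fun k => Nat.casesOn k a τ', fun k => ?_, ?_⟩
    · cases k with
      | zero => simpa [hb] using hab
      | succ k => exact hτ' k
    · rw [List.length_cons, List.range_succ_eq_map, List.map_cons, List.map_map]
      exact congrArg (a :: ·) heq

variable {Γ : Finset (List (Fin N))}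

lemma IsMaxAntichain.exists_prefix_mem (hΓ : IsMaxAntichain P Γ) (hout : ∀ i, ∃ j, 0 < P i j)
    {τ : List (Fin N)} (hτ0 : τ ≠ []) (hτ : Adm P τ) (hlen : ∀ σ ∈ Γ, σ.length ≤ τ.length) :
    ∃ σ ∈ Γ, σ <+: τ := by
  obtain ⟨τ', hτ', heq⟩ := exists_admInf_extend hout hτ0 hτ
  obtain ⟨k, -, hk⟩ := hΓ.2.2 τ' hτ'
  refine ⟨_, hk, heq ▸ List.IsPrefix.map τ' ?_⟩
  have hkτ : k ≤ τ.length := by simpa using hlen _ hk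
  simp [List.prefix_iff_eq_take, List.take_range, Nat.min_eq_left hkτ]

theorem IsMaxAntichain.sum_pathWeight_eq (hΓ : IsMaxAntichain P Γ) (hout : ∀ i, ∃ j, 0 < P i j)
    {A : Matrix (Fin N) (Fin N) ℝ} {w : Fin N → ℝ} (hw : A *ᵥ w = w)
    (hA : ∀ a b, A a b ≠ 0 → 0 < P a b) :
    ∑ σ ∈ Γ, pathWeight A w σ = ∑ i, w i := by
  have hlen : ∀ σ ∈ Γ, σ.length ≤ Γ.sup List.length + 1 :=
    fun σ hσ => Nat.le_succ_of_le (Finset.le_sup hσ)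
  refine sum_pathWeight_of_isAntichain hw hΓ.2.1 hlen fun τ hτ h0 => ?_
  refine hΓ.exists_prefix_mem hout (by rintro rfl; simp at hτ) ?_ (hτ ▸ hlen)
  exact (isChain_ne_zero_of_pathWeight_ne_zero h0).imp fun a b => hA a b

end Antichain

end QM

open QM in
theorem antichain_sum_bounded_irred_general
    {N : ℕ} (hN : 2 ≤ N)
    (P c : Matrix (Fin N) (Fin N) ℝ) (r : ℝ)
    (hc1 : ∀ i j, 0 < P i j → 0 < c i j ∧ c i j < 1)
    (hirr : QM.Irred P)
    (sr : ℝ) (hsreq : QM.PsiG P c r sr = 1)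
    :
    ∃ δ₁ δ₂ : ℝ, 0 < δ₁ ∧ 0 < δ₂ ∧
      ∀ Γ : Finset (List (Fin N)), QM.IsMaxAntichain P Γ →
        δ₁ ≤ ∑ σ ∈ Γ, (QM.wprod P σ * QM.wprod c σ ^ r) ^ (sr / (sr + r)) ∧
        ∑ σ ∈ Γ, (QM.wprod P σ * QM.wprod c σ ^ r) ^ (sr / (sr + r)) ≤ δ₂ := by
  have : Nonempty (Fin N) := ⟨⟨0, by omega⟩⟩
  have hc : ∀ i j, 0 < P i j → 0 < c i j := fun i j h => (hc1 i j h).1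
  obtain ⟨w, hw_pos, hw⟩ :=
    (isIrreducible_AGs (r := r) (s := sr) hc hirr).exists_pos_mulVec_eq_self hsreq
  obtain ⟨imin, himin⟩ := Finite.exists_min w
  obtain ⟨imax, himax⟩ := Finite.exists_max w
  have hS : 0 < ∑ i, w i := Finset.sum_pos (fun i _ => hw_pos i) Finset.univ_nonempty
  refine ⟨(∑ i, w i) / w imax, (∑ i, w i) / w imin, div_pos hS (hw_pos _), div_pos hS (hw_pos _),
    fun Γ hΓ => ?_⟩
  have hsum := hΓ.sum_pathWeight_eq hirr.exists_pos hw fun a b => pos_of_AGs_ne_zero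
  rw [Finset.sum_congr rfl fun σ hσ => rpow_wprod_eq_wprod_AGs hc (hΓ.1 σ hσ).2]
  constructor
  · rw [div_le_iff₀ (hw_pos _), ← hsum, Finset.sum_mul]
    exact Finset.sum_le_sum fun σ hσ => pathWeight_le_wprod_mul (AGs_nonneg hc) himax (hΓ.1 σ hσ).1
  · rw [le_div_iff₀ (hw_pos _), ← hsum, Finset.sum_mul]
    exact Finset.sum_le_sum fun σ hσ => wprod_mul_le_pathWeight (AGs_nonneg hc) himin (hΓ.1 σ hσ).1

open QM in
theorem antichain_sum_bounded_irred
    {N : ℕ} (hN : 2 ≤ N)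
    (P c : Matrix (Fin N) (Fin N) ℝ) (r : ℝ) (hr : 0 < r)
    (hP0 : ∀ i j, 0 ≤ P i j)
    (hProw : ∀ i, ∑ j, P i j = 1)
    (hPcard : ∀ i : Fin N, 2 ≤ {j : Fin N | 0 < P i j}.ncard)
    (hc1 : ∀ i j, 0 < P i j → 0 < c i j ∧ c i j < 1)
    (hc0 : ∀ i j, P i j = 0 → c i j = 0)
    (hirr : QM.Irred P)
    (sr : ℝ) (hsr : 0 < sr) (hsreq : QM.PsiG P c r sr = 1)
    :
    ∃ δ₁ δ₂ : ℝ, 0 < δ₁ ∧ 0 < δ₂ ∧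
      ∀ Γ : Finset (List (Fin N)), QM.IsMaxAntichain P Γ →
        δ₁ ≤ ∑ σ ∈ Γ, (QM.wprod P σ * QM.wprod c σ ^ r) ^ (sr / (sr + r)) ∧
        ∑ σ ∈ Γ, (QM.wprod P σ * QM.wprod c σ ^ r) ^ (sr / (sr + r)) ≤ δ₂ :=
  antichain_sum_bounded_irred_general hN P c r hc1 hirr sr hsreq
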